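/- arXiv:1903.11182 — 3 statements merged into one kernel-verified Lean document; each statement's English description precedes it below -/
import Mathlib

section
/- Let p be analytic on the open unit disc 𝔻 with p(0) = 1, Re p(z) > 0 for all z ∈ 𝔻, and Taylor expansion p(z) = 1 + Σ_{n≥1} c_n zⁿ, and suppose c₁ is real with 0 ≤ c₁ ≤ 2. Then there exist complex numbers x and w with |x| ≤ 1 and |w| ≤ 1 such that 2c₂ = c₁² + (4 − c₁²)·x and 4c₃ = c₁³ + 2c₁(4 − c₁²)·x − c₁(4 − c₁²)·x² + 2(4 − c₁²)(1 − |x|²)·w. -/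
/-!
The Cayley transform `φ = (p - 1) / (p + 1)` maps the disc into itself and vanishes at `0`, so by
the Schwarz lemma `φ = z ψ` with `ψ` a Schur function; comparing coefficients in
`p = 1 + φ + p φ` expresses `c₁, c₂, c₃` through the Taylor coefficients of `ψ`, and reality of
`c₁` makes `ψ(0) = c₁ / 2` real. One step of the Schur algorithm writes a Schur function as
`ψ = (a + z g) / (1 + ā z g)` with `a = ψ(0)` and `g` again a Schur function (if `|a| = 1`, then
`ψ` is constant and `g = 0`). Applying the step to `ψ`, giving `g₁`, and to `g₁`, giving `g₂`,
one takes `x = g₁(0)` and `w = g₂(0)`.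
-/

open Metric Set Filter Function Topology PowerSeries ComplexConjugate

section DSlope

variable {𝕜 E : Type*} [NontriviallyNormedField 𝕜] [NormedAddCommGroup E] [NormedSpace 𝕜 E]
  {f g : 𝕜 → E} {a : 𝕜}

theorem dslope_const (c : E) (a : 𝕜) : dslope (fun _ => c) a = 0 := by
  ext z
  rcases eq_or_ne z a with rfl | hz
  · simp [dslope_same]
  · simp [dslope_of_ne _ hz, slope]

theorem dslope_add (hf : DifferentiableAt 𝕜 f a) (hg : DifferentiableAt 𝕜 g a) :
    dslope (fun z => f z + g z) a = fun z => dslope f a z + dslope g a z := by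
  ext z
  rcases eq_or_ne z a with rfl | hz
  · simp [dslope_same, deriv_fun_add hf hg]
  · simp [dslope_of_ne _ hz, slope, smul_sub, sub_add_sub_comm]

theorem Filter.EventuallyEq.dslope (h : f =ᶠ[𝓝 a] g) : dslope f a =ᶠ[𝓝 a] dslope g a := by
  filter_upwards [h] with z hz
  rcases eq_or_ne z a with rfl | hza
  · simp [dslope_same, h.deriv_eq]
  · simp [dslope_of_ne _ hza, slope, hz, h.eq_of_nhds]

theorem AnalyticAt.dslope (h : AnalyticAt 𝕜 f a) : AnalyticAt 𝕜 (dslope f a) a :=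
  let ⟨_, hq⟩ := h
  hq.has_fpower_series_dslope_fslope.analyticAt

end DSlope

section TaylorSeries

variable {𝕜 : Type*} [NontriviallyNormedField 𝕜] {f g : 𝕜 → 𝕜} {a : 𝕜}

theorem dslope_id (a : 𝕜) : dslope (fun z => z) a = fun _ => 1 := by
  ext z
  rcases eq_or_ne z a with rfl | hz
  · simp [dslope_same]
  · simp [dslope_of_ne _ hz, slope_def_field, sub_ne_zero.2 hz]

theorem dslope_mul (hf : DifferentiableAt 𝕜 f a) (hg : DifferentiableAt 𝕜 g a) :
    dslope (fun z => f z * g z) a = fun z => dslope f a z * g z + f a * dslope g a z := by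
  ext z
  rcases eq_or_ne z a with rfl | hz
  · simp [dslope_same, deriv_fun_mul hf hg]
  · simp only [dslope_of_ne _ hz, slope_def_field]
    field_simp [sub_ne_zero.2 hz]
    ring

/-- Defined through iterated difference quotients, so that it makes sense for every `f`; for `f`
analytic at `a` it is the power series of `f` at `a`. -/
noncomputable def taylorSeries (f : 𝕜 → 𝕜) (a : 𝕜) : PowerSeries 𝕜 :=
  PowerSeries.mk fun n => (swap dslope a)^[n] f a

@[simp]
theorem constantCoeff_taylorSeries (f : 𝕜 → 𝕜) (a : 𝕜) :
    constantCoeff (taylorSeries f a) = f a := by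
  simp [taylorSeries, ← coeff_zero_eq_constantCoeff_apply]

theorem coeff_succ_taylorSeries (f : 𝕜 → 𝕜) (a : 𝕜) (n : ℕ) :
    coeff (n + 1) (taylorSeries f a) = coeff n (taylorSeries (dslope f a) a) := by
  simp [taylorSeries, iterate_succ_apply]

theorem taylorSeries_eq_C_add_X_mul (f : 𝕜 → 𝕜) (a : 𝕜) :
    taylorSeries f a = C (f a) + X * taylorSeries (dslope f a) a := by
  ext (_ | n)
  · simp
  · simp [coeff_succ_taylorSeries]

theorem HasFPowerSeriesAt.coeff_taylorSeries {q : FormalMultilinearSeries 𝕜 𝕜 𝕜}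
    (h : HasFPowerSeriesAt f q a) (n : ℕ) : coeff n (taylorSeries f a) = q.coeff n := by
  simpa [taylorSeries, FormalMultilinearSeries.coeff_iterate_fslope] using
    ((h.has_fpower_series_iterate_dslope_fslope n).coeff_zero 1).symm

theorem Filter.EventuallyEq.taylorSeries_eq (h : f =ᶠ[𝓝 a] g) :
    taylorSeries f a = taylorSeries g a := by
  ext n
  induction n generalizing f g with
  | zero => simp [h.eq_of_nhds]
  | succ n ih => simp only [coeff_succ_taylorSeries, ih h.dslope]

theorem taylorSeries_const (c : 𝕜) (a : 𝕜) : taylorSeries (fun _ => c) a = C c := by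
  have h0 : swap dslope a (0 : 𝕜 → 𝕜) = 0 := dslope_const 0 a
  ext (_ | n)
  · simp
  · rw [coeff_succ_taylorSeries, dslope_const]
    simp [taylorSeries, iterate_fixed h0]

theorem taylorSeries_id (a : 𝕜) : taylorSeries (fun z => z) a = C a + X := by
  ext (_ | n)
  · simp
  · rw [coeff_succ_taylorSeries, dslope_id, taylorSeries_const]
    simp [coeff_X]

theorem taylorSeries_add (hf : AnalyticAt 𝕜 f a) (hg : AnalyticAt 𝕜 g a) :
    taylorSeries (fun z => f z + g z) a = taylorSeries f a + taylorSeries g a := by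
  ext n
  induction n generalizing f g with
  | zero => simp
  | succ n ih =>
    rw [coeff_succ_taylorSeries, dslope_add hf.differentiableAt hg.differentiableAt, map_add,
      coeff_succ_taylorSeries, coeff_succ_taylorSeries]
    exact ih hf.dslope hg.dslope

theorem taylorSeries_mul (hf : AnalyticAt 𝕜 f a) (hg : AnalyticAt 𝕜 g a) :
    taylorSeries (fun z => f z * g z) a = taylorSeries f a * taylorSeries g a := by
  ext n
  induction n generalizing f g with
  | zero => simp
  | succ n ih =>
    rw [coeff_succ_taylorSeries, dslope_mul hf.differentiableAt hg.differentiableAt,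
      taylorSeries_add (f := fun z => dslope f a z * g z) (g := fun z => f a * dslope g a z)
        (hf.dslope.mul hg) (analyticAt_const.mul hg.dslope),
      map_add, ih hf.dslope hg, ih analyticAt_const hg.dslope, taylorSeries_const,
      taylorSeries_eq_C_add_X_mul f, add_mul, mul_assoc, map_add, coeff_succ_X_mul, coeff_C_mul,
      coeff_C_mul, coeff_succ_taylorSeries g, add_comm]

end TaylorSeries

theorem hasFPowerSeriesAt_ofScalars_of_hasSum {𝕜 : Type*} [NontriviallyNormedField 𝕜]
    {f : 𝕜 → 𝕜} {c : ℕ → 𝕜} {s : Set 𝕜} (hs : s ∈ 𝓝 0)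
    (h : ∀ z ∈ s, HasSum (fun n => c n * z ^ n) (f z)) :
    HasFPowerSeriesAt f (FormalMultilinearSeries.ofScalars 𝕜 c) 0 := by
  rw [hasFPowerSeriesAt_iff]
  filter_upwards [hs] with z hz
  simpa [FormalMultilinearSeries.coeff_ofScalars, mul_comm] using h z hz

theorem Complex.norm_sub_le_norm_one_sub_conj_mul {a w : ℂ} (ha : ‖a‖ ≤ 1) (hw : ‖w‖ ≤ 1) :
    ‖w - a‖ ≤ ‖1 - conj a * w‖ := by
  have h : ‖1 - conj a * w‖ ^ 2 - ‖w - a‖ ^ 2 = (1 - ‖a‖ ^ 2) * (1 - ‖w‖ ^ 2) := by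
    simp only [Complex.sq_norm, Complex.normSq_apply, Complex.sub_re, Complex.sub_im,
      Complex.mul_re, Complex.mul_im, Complex.conj_re, Complex.conj_im, Complex.one_re,
      Complex.one_im]
    ring
  have : 0 ≤ (1 - ‖a‖ ^ 2) * (1 - ‖w‖ ^ 2) := by
    apply mul_nonneg <;> nlinarith [norm_nonneg a, norm_nonneg w]
  exact le_of_sq_le_sq (by linarith) (norm_nonneg _)

theorem Complex.norm_sub_one_le_norm_add_one {z : ℂ} (hz : 0 ≤ z.re) : ‖z - 1‖ ≤ ‖z + 1‖ := by
  have h : ‖z + 1‖ ^ 2 - ‖z - 1‖ ^ 2 = 4 * z.re := by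
    simp only [Complex.sq_norm, Complex.normSq_apply, Complex.sub_re, Complex.sub_im,
      Complex.add_re, Complex.add_im, Complex.one_re, Complex.one_im]
    ring
  exact le_of_sq_le_sq (by linarith) (norm_nonneg _)

structure IsSchurFunction (f : ℂ → ℂ) : Prop where
  differentiableOn : DifferentiableOn ℂ f (ball 0 1)
  mapsTo : MapsTo f (ball 0 1) (closedBall 0 1)

namespace IsSchurFunction

variable {f : ℂ → ℂ}

theorem analyticAt (hf : IsSchurFunction f) : AnalyticAt ℂ f 0 :=
  hf.differentiableOn.analyticAt (ball_mem_nhds 0 one_pos)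

theorem norm_le_one (hf : IsSchurFunction f) {z : ℂ} (hz : z ∈ ball (0 : ℂ) 1) : ‖f z‖ ≤ 1 := by
  simpa using hf.mapsTo hz

protected theorem dslope (hf : IsSchurFunction f) (h0 : f 0 = 0) :
    IsSchurFunction (dslope f 0) where
  differentiableOn :=
    (Complex.differentiableOn_dslope (ball_mem_nhds 0 one_pos)).2 hf.differentiableOn
  mapsTo _ hz := by
    simpa using Complex.norm_dslope_le_div_of_mapsTo_ball hf.differentiableOn
      (by rw [h0]; exact hf.mapsTo) hz

theorem one_sub_conj_mul_ne_zero (hf : IsSchurFunction f) {a : ℂ} (ha : ‖a‖ < 1) {z : ℂ}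
    (hz : z ∈ ball (0 : ℂ) 1) : 1 - conj a * f z ≠ 0 := by
  refine sub_ne_zero.2 fun h => ?_
  have : ‖conj a * f z‖ < 1 := by
    rw [norm_mul, Complex.norm_conj]
    nlinarith [norm_nonneg a, norm_nonneg (f z), hf.norm_le_one hz]
  simp [← h] at this

theorem moebius (hf : IsSchurFunction f) {a : ℂ} (ha : ‖a‖ < 1) :
    IsSchurFunction fun z => (f z - a) / (1 - conj a * f z) where
  differentiableOn := (hf.differentiableOn.sub_const a).div
    ((hf.differentiableOn.const_mul _).const_sub 1) fun _ hz => hf.one_sub_conj_mul_ne_zero ha hz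
  mapsTo z hz := by
    rw [mem_closedBall_zero_iff, norm_div,
      div_le_one (norm_pos_iff.2 (hf.one_sub_conj_mul_ne_zero ha hz))]
    exact Complex.norm_sub_le_norm_one_sub_conj_mul ha.le (hf.norm_le_one hz)

theorem eqOn_const_of_norm_eq_one (hf : IsSchurFunction f) (h : ‖f 0‖ = 1) :
    EqOn f (fun _ => f 0) (ball 0 1) :=
  Complex.eqOn_of_isPreconnected_of_isMaxOn_norm (convex_ball 0 1).isPreconnected isOpen_ball
    hf.differentiableOn (mem_ball_self one_pos) fun z hz => by simpa [h] using hf.norm_le_one hz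

theorem exists_schur_step (hf : IsSchurFunction f) : ∃ g, IsSchurFunction g ∧
    EqOn (fun z => f z + conj (f 0) * f z * (z * g z)) (fun z => f 0 + z * g z) (ball 0 1) := by
  rcases (hf.norm_le_one (mem_ball_self one_pos)).lt_or_eq with ha | ha
  · set χ := fun z => (f z - f 0) / (1 - conj (f 0) * f z)
    have hχ0 : χ 0 = 0 := by simp [χ]
    refine ⟨dslope χ 0, (hf.moebius ha).dslope hχ0, fun z hz => ?_⟩
    have hχz : z * dslope χ 0 z = χ z := by simpa [hχ0] using sub_smul_dslope χ 0 z
    have hχ : χ z * (1 - conj (f 0) * f z) = f z - f 0 :=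
      div_mul_cancel₀ _ (hf.one_sub_conj_mul_ne_zero ha hz)
    simp only [hχz]
    linear_combination -hχ
  · refine ⟨0, ⟨differentiableOn_const 0, fun _ _ => by simp⟩, fun z hz => ?_⟩
    simp [hf.eqOn_const_of_norm_eq_one ha hz]

theorem exists_coeff_schur_step (hf : IsSchurFunction f) : ∃ g, IsSchurFunction g ∧
    coeff 1 (taylorSeries f 0) = (1 - ‖f 0‖ ^ 2) * g 0 ∧
    coeff 2 (taylorSeries f 0) =
      (1 - ‖f 0‖ ^ 2) * (coeff 1 (taylorSeries g 0) - conj (f 0) * g 0 ^ 2) := by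
  obtain ⟨g, hg, hfg⟩ := hf.exists_schur_step
  have hfa := hf.analyticAt
  have hga := hg.analyticAt
  have hser : taylorSeries f 0 + C (conj (f 0)) * taylorSeries f 0 * (X * taylorSeries g 0) =
      C (f 0) + X * taylorSeries g 0 := by
    have h := (eventuallyEq_of_mem (ball_mem_nhds 0 one_pos) hfg).taylorSeries_eq
    rw [taylorSeries_add, taylorSeries_mul, taylorSeries_mul, taylorSeries_mul, taylorSeries_add,
      taylorSeries_mul, taylorSeries_const, taylorSeries_const, taylorSeries_id, map_zero,
      zero_add] at h
    · exact h
    all_goals fun_prop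
  have h1 : coeff 1 (taylorSeries f 0) + conj (f 0) * f 0 * g 0 = g 0 := by
    simpa [coeff_mul, Finset.Nat.sum_antidiagonal_succ, coeff_X, coeff_C]
      using congrArg (coeff 1) hser
  have h2 : coeff 2 (taylorSeries f 0) + (conj (f 0) * f 0 * coeff 1 (taylorSeries g 0) +
      conj (f 0) * coeff 1 (taylorSeries f 0) * g 0) = coeff 1 (taylorSeries g 0) := by
    simpa [coeff_mul, Finset.Nat.sum_antidiagonal_succ, coeff_X, coeff_C]
      using congrArg (coeff 2) hser
  have hn := Complex.conj_mul' (f 0)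
  have h1' : coeff 1 (taylorSeries f 0) = (1 - ‖f 0‖ ^ 2) * g 0 := by
    linear_combination h1 - g 0 * hn
  refine ⟨g, hg, h1', ?_⟩
  linear_combination h2 - coeff 1 (taylorSeries g 0) * hn - conj (f 0) * g 0 * h1'

end IsSchurFunction

structure IsCaratheodoryFunction (p : ℂ → ℂ) : Prop where
  differentiableOn : DifferentiableOn ℂ p (ball 0 1)
  apply_zero : p 0 = 1
  re_pos : ∀ z ∈ ball (0 : ℂ) 1, 0 < (p z).re

namespace IsCaratheodoryFunction

variable {p : ℂ → ℂ}

theorem add_one_ne_zero (hp : IsCaratheodoryFunction p) {z : ℂ} (hz : z ∈ ball (0 : ℂ) 1) :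
    p z + 1 ≠ 0 := fun h => by
  have := hp.re_pos z hz
  rw [eq_neg_of_add_eq_zero_left h] at this
  norm_num at this

theorem isSchurFunction_cayley (hp : IsCaratheodoryFunction p) :
    IsSchurFunction fun z => (p z - 1) / (p z + 1) where
  differentiableOn := (hp.differentiableOn.sub_const 1).div (hp.differentiableOn.add_const 1)
    fun _ hz => hp.add_one_ne_zero hz
  mapsTo z hz := by
    rw [mem_closedBall_zero_iff, norm_div, div_le_one (norm_pos_iff.2 (hp.add_one_ne_zero hz))]
    exact Complex.norm_sub_one_le_norm_add_one (hp.re_pos z hz).le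

theorem exists_schur_representation (hp : IsCaratheodoryFunction p) : ∃ ψ, IsSchurFunction ψ ∧
    EqOn p (fun z => 1 + z * ψ z + p z * (z * ψ z)) (ball 0 1) := by
  set φ := fun z => (p z - 1) / (p z + 1)
  have hφ0 : φ 0 = 0 := by simp [φ, hp.apply_zero]
  refine ⟨dslope φ 0, hp.isSchurFunction_cayley.dslope hφ0, fun z hz => ?_⟩
  have hφz : z * dslope φ 0 z = φ z := by simpa [hφ0] using sub_smul_dslope φ 0 z
  have hφ : φ z * (p z + 1) = p z - 1 := div_mul_cancel₀ _ (hp.add_one_ne_zero hz)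
  simp only [hφz]
  linear_combination -hφ

theorem exists_coeff_schur_representation (hp : IsCaratheodoryFunction p) :
    ∃ ψ, IsSchurFunction ψ ∧
    coeff 1 (taylorSeries p 0) = 2 * ψ 0 ∧
    coeff 2 (taylorSeries p 0) =
      2 * coeff 1 (taylorSeries ψ 0) + coeff 1 (taylorSeries p 0) * ψ 0 ∧
    coeff 3 (taylorSeries p 0) = 2 * coeff 2 (taylorSeries ψ 0) +
      coeff 1 (taylorSeries p 0) * coeff 1 (taylorSeries ψ 0) +
      coeff 2 (taylorSeries p 0) * ψ 0 := by
  obtain ⟨ψ, hψ, hpψ⟩ := hp.exists_schur_representation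
  have hpa : AnalyticAt ℂ p 0 := hp.differentiableOn.analyticAt (ball_mem_nhds 0 one_pos)
  have hψa := hψ.analyticAt
  have hser : taylorSeries p 0 =
      1 + X * taylorSeries ψ 0 + taylorSeries p 0 * (X * taylorSeries ψ 0) := by
    have h := (eventuallyEq_of_mem (ball_mem_nhds 0 one_pos) hpψ).taylorSeries_eq
    rw [taylorSeries_add, taylorSeries_add, taylorSeries_mul, taylorSeries_mul, taylorSeries_mul,
      taylorSeries_const, taylorSeries_id, map_zero, zero_add, map_one] at h
    · exact h
    all_goals fun_prop
  refine ⟨ψ, hψ, ?_, ?_, ?_⟩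
  · simpa [coeff_mul, Finset.Nat.sum_antidiagonal_succ, coeff_X, hp.apply_zero, two_mul]
      using congrArg (coeff 1) hser
  · simpa [coeff_mul, Finset.Nat.sum_antidiagonal_succ, coeff_X, hp.apply_zero, two_mul,
      add_assoc] using congrArg (coeff 2) hser
  · simpa [coeff_mul, Finset.Nat.sum_antidiagonal_succ, coeff_X, hp.apply_zero, two_mul,
      add_assoc] using congrArg (coeff 3) hser

end IsCaratheodoryFunction

theorem caratheodory_c2_c3_general (p : ℂ → ℂ) (c : ℕ → ℂ) (hc0 : c 0 = 1)
    (hp : AnalyticOn ℂ p (Metric.ball (0 : ℂ) 1))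
    (hexp : ∀ z ∈ Metric.ball (0 : ℂ) 1, HasSum (fun n => c n * z ^ n) (p z))
    (hre : ∀ z ∈ Metric.ball (0 : ℂ) 1, 0 < (p z).re)
    (hc1im : (c 1).im = 0) :
    ∃ x w : ℂ, ‖x‖ ≤ 1 ∧ ‖w‖ ≤ 1 ∧
      2 * c 2 = c 1 ^ 2 + (4 - c 1 ^ 2) * x ∧
      4 * c 3 = c 1 ^ 3 + 2 * c 1 * (4 - c 1 ^ 2) * x - c 1 * (4 - c 1 ^ 2) * x ^ 2 +
        2 * (4 - c 1 ^ 2) * (1 - ((‖x‖ : ℝ) : ℂ) ^ 2) * w := by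
  have hc n : coeff n (taylorSeries p 0) = c n := by
    rw [(hasFPowerSeriesAt_ofScalars_of_hasSum (ball_mem_nhds 0 one_pos) hexp).coeff_taylorSeries,
      FormalMultilinearSeries.coeff_ofScalars]
  have hP : IsCaratheodoryFunction p := ⟨hp.differentiableOn, by simpa [hc0] using hc 0, hre⟩
  obtain ⟨ψ, hψ, h1, h2, h3⟩ := hP.exists_coeff_schur_representation
  obtain ⟨g₁, hg₁, hs1, hs2⟩ := hψ.exists_coeff_schur_step
  obtain ⟨g₂, hg₂, ht1, -⟩ := hg₁.exists_coeff_schur_step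
  simp only [hc] at h1 h2 h3
  have hconj : conj (ψ 0) = ψ 0 := by
    rw [Complex.conj_eq_iff_im]
    simpa [hc1im] using congrArg Complex.im h1
  have hnorm : (‖ψ 0‖ : ℂ) ^ 2 = ψ 0 ^ 2 := by rw [← Complex.conj_mul', hconj, sq]
  have h0 : (0 : ℂ) ∈ ball (0 : ℂ) 1 := mem_ball_self one_pos
  refine ⟨g₁ 0, g₂ 0, hg₁.norm_le_one h0, hg₂.norm_le_one h0, ?_, ?_⟩
  all_goals
    simp only [h1, h2, h3, hs1, hs2, ht1, hconj, hnorm]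
    ring

/-- If `p` is analytic on the unit disc with `p(0) = 1`, positive real part, expansion
`p(z) = 1 + ∑_{n≥1} cₙ zⁿ`, and `c₁` real with `0 ≤ c₁ ≤ 2`, then there exist `x`, `w`
with `|x| ≤ 1`, `|w| ≤ 1` such that `2c₂ = c₁² + (4 - c₁²)x` and
`4c₃ = c₁³ + 2c₁(4 - c₁²)x - c₁(4 - c₁²)x² + 2(4 - c₁²)(1 - |x|²)w`. -/
theorem caratheodory_c2_c3 (p : ℂ → ℂ) (c : ℕ → ℂ) (hc0 : c 0 = 1)
    (hp : AnalyticOn ℂ p (Metric.ball (0 : ℂ) 1))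
    (hexp : ∀ z ∈ Metric.ball (0 : ℂ) 1, HasSum (fun n => c n * z ^ n) (p z))
    (hre : ∀ z ∈ Metric.ball (0 : ℂ) 1, 0 < (p z).re)
    (hc1im : (c 1).im = 0) (hc1lo : 0 ≤ (c 1).re) (hc1hi : (c 1).re ≤ 2) :
    ∃ x w : ℂ, ‖x‖ ≤ 1 ∧ ‖w‖ ≤ 1 ∧
      2 * c 2 = c 1 ^ 2 + (4 - c 1 ^ 2) * x ∧
      4 * c 3 = c 1 ^ 3 + 2 * c 1 * (4 - c 1 ^ 2) * x - c 1 * (4 - c 1 ^ 2) * x ^ 2 +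
        2 * (4 - c 1 ^ 2) * (1 - ((‖x‖ : ℝ) : ℂ) ^ 2) * w :=
  caratheodory_c2_c3_general p c hc0 hp hexp hre hc1im
end

section
/- Let 1 ≤ α ≤ 2 and set β = 2 − α/2. Then for all real c with 0 ≤ c ≤ 2 and all real δ with 0 ≤ δ ≤ 1, the quantity F(c, δ) = (β²/48)·[(4β² − 1)c⁴ + 8(4 − c²)c + 2(4 − c²)c²δ + (c − 6)(c − 2)(4 − c²)δ²] satisfies F(c, δ) ≤ (β²/3)·[4(β² − 1) + 3]. -/
/-! Multiplying out, the claim is `P (4β² - 1) c δ ≤ 16 (4β² - 1)` for the polynomial `starlikePoly`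
below, and `16k - P k c δ` factors as `(4 - c²) ((k - 3)(4 + c²) + Q c δ)`. Since `β ≥ 1` gives
`k = 4β² - 1 ≥ 3`, it remains to see `Q c δ ≥ 0`. As a function of `δ`, `Q` vanishes at `δ = 1`,
and indeed `Q c δ = (1 - δ) (3c² - 8c + 12 + (6 - c)(2 - c) δ)`, which is nonnegative for
`c ≤ 2` and `δ ∈ [0, 1]`. -/

def starlikePoly (k c δ : ℝ) : ℝ :=
  k * c ^ 4 + 8 * (4 - c ^ 2) * c + 2 * (4 - c ^ 2) * c ^ 2 * δ
    + (c - 6) * (c - 2) * (4 - c ^ 2) * δ ^ 2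

lemma starlike_inner_nonneg {c δ : ℝ} (hc : c ≤ 2) (hδ₀ : 0 ≤ δ) (hδ₁ : δ ≤ 1) :
    0 ≤ 3 * (4 + c ^ 2) - 8 * c - 2 * c ^ 2 * δ - (c - 6) * (c - 2) * δ ^ 2 := by
  have hfactor : 3 * (4 + c ^ 2) - 8 * c - 2 * c ^ 2 * δ - (c - 6) * (c - 2) * δ ^ 2
      = (1 - δ) * (3 * c ^ 2 - 8 * c + 12 + (6 - c) * (2 - c) * δ) := by ring
  have hquad : 0 < 3 * c ^ 2 - 8 * c + 12 := by nlinarith [sq_nonneg (3 * c - 4)]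
  have hlin : 0 ≤ (6 - c) * (2 - c) * δ :=
    mul_nonneg (mul_nonneg (by linarith) (by linarith)) hδ₀
  rw [hfactor]
  exact mul_nonneg (by linarith) (by linarith)

lemma starlikePoly_le {k c δ : ℝ} (hk : 3 ≤ k) (hc₀ : -2 ≤ c) (hc₂ : c ≤ 2)
    (hδ₀ : 0 ≤ δ) (hδ₁ : δ ≤ 1) : starlikePoly k c δ ≤ 16 * k := by
  have hfactor : 16 * k - starlikePoly k c δ = (4 - c ^ 2) * ((k - 3) * (4 + c ^ 2)
      + (3 * (4 + c ^ 2) - 8 * c - 2 * c ^ 2 * δ - (c - 6) * (c - 2) * δ ^ 2)) := by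
    unfold starlikePoly; ring
  have hc : 0 ≤ 4 - c ^ 2 := by nlinarith
  have hinner := starlike_inner_nonneg hc₂ hδ₀ hδ₁
  have hprod : 0 ≤ (k - 3) * (4 + c ^ 2) := mul_nonneg (by linarith) (by positivity)
  nlinarith [mul_nonneg hc (add_nonneg hprod hinner)]

theorem F_bound_starlike_general (α : ℝ) (hα₂ : α ≤ 2) (β : ℝ) (hβ : β = 2 - α / 2)
    (c δ : ℝ) (hc₀ : 0 ≤ c) (hc₂ : c ≤ 2) (hδ₀ : 0 ≤ δ) (hδ₁ : δ ≤ 1) :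
    (β ^ 2 / 48) * ((4 * β ^ 2 - 1) * c ^ 4 + 8 * (4 - c ^ 2) * c
        + 2 * (4 - c ^ 2) * c ^ 2 * δ + (c - 6) * (c - 2) * (4 - c ^ 2) * δ ^ 2) ≤
      (β ^ 2 / 3) * (4 * (β ^ 2 - 1) + 3) := by
  have hβ₁ : 1 ≤ β := by rw [hβ]; linarith
  have hk : 3 ≤ 4 * β ^ 2 - 1 := by nlinarith
  calc (β ^ 2 / 48) * starlikePoly (4 * β ^ 2 - 1) c δ
      ≤ (β ^ 2 / 48) * (16 * (4 * β ^ 2 - 1)) :=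
        mul_le_mul_of_nonneg_left (starlikePoly_le hk (by linarith) hc₂ hδ₀ hδ₁) (by positivity)
    _ = (β ^ 2 / 3) * (4 * (β ^ 2 - 1) + 3) := by ring

/-- For `1 ≤ α ≤ 2`, `β = 2 - α/2`, `c ∈ [0,2]`, `δ ∈ [0,1]`:
`(β²/48)[(4β² - 1)c⁴ + 8(4 - c²)c + 2(4 - c²)c²δ + (c - 6)(c - 2)(4 - c²)δ²]
  ≤ (β²/3)[4(β² - 1) + 3]`. -/
theorem F_bound_starlike (α : ℝ) (hα₁ : 1 ≤ α) (hα₂ : α ≤ 2) (β : ℝ) (hβ : β = 2 - α / 2)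
    (c δ : ℝ) (hc₀ : 0 ≤ c) (hc₂ : c ≤ 2) (hδ₀ : 0 ≤ δ) (hδ₁ : δ ≤ 1) :
    (β ^ 2 / 48) * ((4 * β ^ 2 - 1) * c ^ 4 + 8 * (4 - c ^ 2) * c
        + 2 * (4 - c ^ 2) * c ^ 2 * δ + (c - 6) * (c - 2) * (4 - c ^ 2) * δ ^ 2) ≤
      (β ^ 2 / 3) * (4 * (β ^ 2 - 1) + 3) :=
  F_bound_starlike_general α hα₂ β hβ c δ hc₀ hc₂ hδ₀ hδ₁
end

section
/- Let 1 ≤ α ≤ 2 and set β = 2 − α/2. Then for all real c with 0 ≤ c ≤ 2 and all real δ with 0 ≤ δ ≤ 1, the quantity F(c, δ) = (β²/144)·[((1 + β − 2β²)/2)c⁴ + 3c(4 − c²) + ((2 + β)/2)c²(4 − c²)δ + ((c − 2)(c − 4)(4 − c²)/2)δ²] satisfies F(c, δ) ≤ (β²/144)·(17β² + 2β + 17)/(1 + β²). -/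
/-!
The bracket is a quadratic in `δ` whose leading coefficient `(2 - c)²(4 - c)(2 + c)/2` is
nonnegative on `[0, 2]`, so it is maximised at `δ = 0` or `δ = 1`. At `δ = 1` it collapses to
`16 + 2(1 + β)c² - (1 + β²)c⁴`, a quadratic in `c²` whose maximum is exactly
`(17β² + 2β + 17)/(1 + β²) = 17 + 2β/(1 + β²)`. At `δ = 0` the `c⁴` coefficient `(1 - β)(1 + 2β)/2`
is nonpositive for `β ≥ 1`, leaving `3c(4 - c²) ≤ 17`.
-/

theorem quadratic_le_of_endpoints_le {a b q M δ : ℝ} (hq : 0 ≤ q) (hδ₀ : 0 ≤ δ) (hδ₁ : δ ≤ 1)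
    (h₀ : a ≤ M) (h₁ : a + b + q ≤ M) : a + b * δ + q * δ ^ 2 ≤ M := by
  have hconv : a + b * δ + q * δ ^ 2 = (1 - δ) * a + δ * (a + b + q) - q * (δ * (1 - δ)) := by
    ring
  nlinarith [mul_nonneg hq (mul_nonneg hδ₀ (sub_nonneg.2 hδ₁))]

theorem sixteen_add_sq_sub_pow_four_le (β c : ℝ) :
    16 + 2 * (1 + β) * c ^ 2 - (1 + β ^ 2) * c ^ 4 ≤ (17 * β ^ 2 + 2 * β + 17) / (1 + β ^ 2) := by
  rw [le_div_iff₀ (by positivity)]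
  nlinarith [sq_nonneg ((1 + β ^ 2) * c ^ 2 - (1 + β))]

theorem seventeen_le_div (β : ℝ) (hβ : 0 ≤ β) :
    17 ≤ (17 * β ^ 2 + 2 * β + 17) / (1 + β ^ 2) := by
  rw [le_div_iff₀ (by positivity)]
  linarith

theorem three_mul_mul_four_sub_sq_le {c : ℝ} (hc : 0 ≤ c) : 3 * c * (4 - c ^ 2) ≤ 17 := by
  nlinarith [mul_nonneg hc (sq_nonneg (c - 1)), sq_nonneg (c - 5 / 4)]

theorem F_bound_convex_general (α : ℝ) (hα₂ : α ≤ 2) (β : ℝ) (hβ : β = 2 - α / 2)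
    (c δ : ℝ) (hc₀ : 0 ≤ c) (hc₂ : c ≤ 2) (hδ₀ : 0 ≤ δ) (hδ₁ : δ ≤ 1) :
    (β ^ 2 / 144) * (((1 + β - 2 * β ^ 2) / 2) * c ^ 4 + 3 * c * (4 - c ^ 2)
        + ((2 + β) / 2) * c ^ 2 * (4 - c ^ 2) * δ
        + ((c - 2) * (c - 4) * (4 - c ^ 2) / 2) * δ ^ 2) ≤
      (β ^ 2 / 144) * ((17 * β ^ 2 + 2 * β + 17) / (1 + β ^ 2)) := by
  have hβ₁ : 1 ≤ β := by linarith
  refine mul_le_mul_of_nonneg_left (quadratic_le_of_endpoints_le ?_ hδ₀ hδ₁ ?_ ?_) (by positivity)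
  · have hfactor : (c - 2) * (c - 4) * (4 - c ^ 2) = (2 - c) ^ 2 * ((4 - c) * (2 + c)) := by ring
    rw [hfactor]
    have : 0 ≤ (4 - c) * (2 + c) := mul_nonneg (by linarith) (by linarith)
    positivity
  · have hlead : (1 + β - 2 * β ^ 2) / 2 * c ^ 4 ≤ 0 :=
      mul_nonpos_of_nonpos_of_nonneg (by nlinarith) (by positivity)
    linarith [three_mul_mul_four_sub_sq_le hc₀, seventeen_le_div β (by linarith)]
  · convert sixteen_add_sq_sub_pow_four_le β c using 1
    ring

/-- For `1 ≤ α ≤ 2`, `β = 2 - α/2`, `c ∈ [0,2]`, `δ ∈ [0,1]`: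
`(β²/144)[((1 + β - 2β²)/2)c⁴ + 3c(4 - c²) + ((2 + β)/2)c²(4 - c²)δ
  + ((c - 2)(c - 4)(4 - c²)/2)δ²] ≤ (β²/144)(17β² + 2β + 17)/(1 + β²)`. -/
theorem F_bound_convex (α : ℝ) (hα₁ : 1 ≤ α) (hα₂ : α ≤ 2) (β : ℝ) (hβ : β = 2 - α / 2)
    (c δ : ℝ) (hc₀ : 0 ≤ c) (hc₂ : c ≤ 2) (hδ₀ : 0 ≤ δ) (hδ₁ : δ ≤ 1) :
    (β ^ 2 / 144) * (((1 + β - 2 * β ^ 2) / 2) * c ^ 4 + 3 * c * (4 - c ^ 2)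
        + ((2 + β) / 2) * c ^ 2 * (4 - c ^ 2) * δ
        + ((c - 2) * (c - 4) * (4 - c ^ 2) / 2) * δ ^ 2) ≤
      (β ^ 2 / 144) * ((17 * β ^ 2 + 2 * β + 17) / (1 + β ^ 2)) :=
  F_bound_convex_general α hα₂ β hβ c δ hc₀ hc₂ hδ₀ hδ₁
end
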